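/- For every integer m ≥ 2, the integral over the open cube (0,1)^m of ∏_{i=1}^{m−1} 1/(1 − yᵢ·y_{i+1}), with respect to m-dimensional Lebesgue measure, equals the sum over all tuples (k₁,…,k_{m−1}) of positive integers of 1/(k₁ · (k₁+k₂−1) · (k₂+k₃−1) ⋯ (k_{m−2}+k_{m−1}−1) · k_{m−1}). -/

import Mathlib

open MeasureTheory Real
open scoped ENNReal

/-- Extend a tuple `y : Fin m → ℝ` to a function on `ℕ` (0-indexed), by `0` outside. -/
noncomputable def padR (m : ℕ) (y : Fin m → ℝ) (i : ℕ) : ℝ :=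
  if h : i < m then y ⟨i, h⟩ else 0

/-- Extend a tuple `k : Fin m → ℕ` to a function on `ℕ` (0-indexed), by `0` outside. -/
def padN (m : ℕ) (k : Fin m → ℕ) (i : ℕ) : ℕ :=
  if h : i < m then k ⟨i, h⟩ else 0

/-- Exponent of coordinate `j` in the monomial expansion. -/
def expo (n : ℕ) (k : Fin n → ℕ) (j : ℕ) : ℕ :=
  padN n k j + if j = 0 then 0 else padN n k (j - 1)

theorem measurable_padR (m : ℕ) (i : ℕ) : Measurable fun y : Fin m → ℝ => padR m y i := by
  unfold padR
  by_cases h : i < m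
  · simpa [h] using measurable_pi_apply (⟨i, h⟩ : Fin m)
  · simpa [h] using measurable_const

theorem lintegral_fin_pi_prod {n : ℕ} (f : Fin n → ℝ → ℝ≥0∞) (hf : ∀ i, Measurable (f i)) :
    ∫⁻ y : Fin n → ℝ, ∏ i, f i (y i) = ∏ i, ∫⁻ x, f i x := by
  induction n with
  | zero => simp [volume_pi]
  | succ n ih =>
    calc ∫⁻ y : Fin (n+1) → ℝ, ∏ i, f i (y i)
        = ∫⁻ x : ℝ × (Fin n → ℝ), f 0 x.1 * ∏ i : Fin n, f i.succ (x.2 i) := by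
          rw [volume_pi, ← ((measurePreserving_piFinSuccAbove
            (fun _ : Fin (n+1) => (volume : Measure ℝ)) 0).symm).lintegral_comp]
          · refine lintegral_congr fun x => ?_
            simp [MeasurableEquiv.piFinSuccAbove_symm_apply, Fin.insertNthEquiv,
              Fin.prod_univ_succ, Fin.insertNth_zero, Fin.zero_succAbove]
          · exact Finset.measurable_prod _ fun i _ => (hf i).comp (measurable_pi_apply i)
        _ = (∫⁻ x, f 0 x) * ∫⁻ x : Fin n → ℝ, ∏ i : Fin n, f i.succ (x i) := by
          rw [← lintegral_prod_mul ((hf 0).aemeasurable)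
            ((Finset.measurable_prod _ fun i _ => (hf i.succ).comp
              (measurable_pi_apply i)).aemeasurable)]
          rfl
        _ = ∏ i, ∫⁻ x, f i x := by
          rw [ih (fun i => f i.succ) fun i => hf i.succ, Fin.prod_univ_succ]

theorem tsum_prod_fin {n : ℕ} (a : Fin n → ℕ → ℝ≥0∞) :
    ∏ i, ∑' k, a i k = ∑' k : Fin n → ℕ, ∏ i, a i (k i) := by
  induction n with
  | zero =>
    simp [tsum_eq_single (fun (i : Fin 0) => 0)
      (fun b hb => absurd (funext fun i => i.elim0) hb)]
  | succ n ih =>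
    rw [Fin.prod_univ_succ, ih (fun i => a i.succ)]
    calc (∑' k, a 0 k) * ∑' t : Fin n → ℕ, ∏ i, a i.succ (t i)
        = ∑' j : ℕ, a 0 j * ∑' t : Fin n → ℕ, ∏ i, a i.succ (t i) := ENNReal.tsum_mul_right.symm
      _ = ∑' j : ℕ, ∑' t : Fin n → ℕ, a 0 j * ∏ i, a i.succ (t i) :=
          tsum_congr fun j => ENNReal.tsum_mul_left.symm
      _ = ∑' p : ℕ × (Fin n → ℕ), a 0 p.1 * ∏ i, a i.succ (p.2 i) := ENNReal.tsum_prod.symm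
      _ = ∑' k : Fin (n+1) → ℕ, ∏ i, a i (k i) := by
          rw [← (Fin.consEquiv (fun _ : Fin (n+1) => ℕ)).tsum_eq]
          refine tsum_congr fun q => ?_
          rw [Fin.prod_univ_succ]
          simp [Fin.consEquiv]

theorem lint_coord (e : ℕ) :
    ∫⁻ x : ℝ, (Set.Ioo (0:ℝ) 1).indicator (fun x => ENNReal.ofReal (x ^ e)) x
      = ENNReal.ofReal (1 / (e + 1)) := by
  rw [lintegral_indicator measurableSet_Ioo]
  have hint : IntegrableOn (fun x : ℝ => x ^ e) (Set.Ioo 0 1) :=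
    ((continuous_pow e).integrableOn_Icc (a := 0) (b := 1)).mono_set Set.Ioo_subset_Icc_self
  rw [← ofReal_integral_eq_lintegral_ofReal hint]
  · congr 1
    rw [show (∫ x in Set.Ioo (0:ℝ) 1, x ^ e) = ∫ x in Set.Ioc (0:ℝ) 1, x ^ e from
      setIntegral_congr_set MeasureTheory.Ioo_ae_eq_Ioc,
      ← intervalIntegral.integral_of_le zero_le_one, integral_pow]
    norm_num
  · exact ae_restrict_of_forall_mem measurableSet_Ioo fun x hx => pow_nonneg hx.1.le e

/-- Monomial identity. -/
theorem monomial_eq (p : ℕ) (k : Fin (p+1) → ℕ) (y : Fin (p+2) → ℝ) :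
    ∏ i ∈ Finset.range (p+1), (padR (p+2) y i * padR (p+2) y (i+1)) ^ padN (p+1) k i
      = ∏ j ∈ Finset.range (p+2), padR (p+2) y j ^ expo (p+1) k j := by
  have h1 : padN (p+1) k (p+1) = 0 := dif_neg (lt_irrefl _)
  have hA : ∏ j ∈ Finset.range (p+2), padR (p+2) y j ^ padN (p+1) k j
      = ∏ i ∈ Finset.range (p+1), padR (p+2) y i ^ padN (p+1) k i := by
    rw [Finset.prod_range_succ, h1, pow_zero, mul_one]
  have hB : ∏ j ∈ Finset.range (p+2), padR (p+2) y j ^ (if j = 0 then 0 else padN (p+1) k (j-1))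
      = ∏ i ∈ Finset.range (p+1), padR (p+2) y (i+1) ^ padN (p+1) k i := by
    rw [Finset.prod_range_succ']
    simp [Nat.succ_ne_zero]
  calc ∏ i ∈ Finset.range (p+1), (padR (p+2) y i * padR (p+2) y (i+1)) ^ padN (p+1) k i
      = (∏ i ∈ Finset.range (p+1), padR (p+2) y i ^ padN (p+1) k i) *
        ∏ i ∈ Finset.range (p+1), padR (p+2) y (i+1) ^ padN (p+1) k i := by
        simp_rw [mul_pow]; rw [Finset.prod_mul_distrib]
    _ = ∏ j ∈ Finset.range (p+2), padR (p+2) y j ^ expo (p+1) k j := by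
        rw [← hA, ← hB, ← Finset.prod_mul_distrib]
        exact Finset.prod_congr rfl fun j _ => (pow_add _ _ _).symm

/-- The denominator identity. -/
theorem denom_eq (p : ℕ) (k : Fin (p+1) → ℕ) :
    ∏ j ∈ Finset.range (p+2), (1 / ((expo (p+1) k j : ℝ) + 1))
      = 1 / (((padN (p+1) k 0 : ℝ) + 1) *
          (∏ i ∈ Finset.range p,
            ((padN (p+1) k i : ℝ) + (padN (p+1) k (i+1) : ℝ) + 1)) *
          ((padN (p+1) k p : ℝ) + 1)) := by
  simp_rw [one_div, Finset.prod_inv_distrib]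
  congr 1
  rw [Finset.prod_range_succ, Finset.prod_range_succ']
  have h0 : ((expo (p+1) k 0 : ℝ) + 1) = (padN (p+1) k 0 : ℝ) + 1 := by
    have : expo (p+1) k 0 = padN (p+1) k 0 := by simp [expo]
    rw [this]
  have hlast : ((expo (p+1) k (p+1) : ℝ) + 1) = (padN (p+1) k p : ℝ) + 1 := by
    have : padN (p+1) k (p+1) = 0 := dif_neg (lt_irrefl _)
    simp [expo, this]
  have hmid : ∀ i ∈ Finset.range p,
      ((expo (p+1) k (i+1) : ℝ) + 1)
        = (padN (p+1) k i : ℝ) + (padN (p+1) k (i+1) : ℝ) + 1 := by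
    intro i _
    simp [expo, Nat.succ_ne_zero]
    push_cast
    ring
  rw [h0, hlast, Finset.prod_congr rfl hmid]
  ring

/-- The cube integral `∫_{(0,1)^m} ∏_{i=1}^{m-1} dy/(1 - yᵢ y_{i+1})` equals the series
`∑_{k₁,…,k_{m-1} ≥ 1} 1/(k₁ (k₁+k₂-1) ⋯ (k_{m-2}+k_{m-1}-1) k_{m-1})`, where the tuple
of positive integers `(k₁,…,k_{m-1})` is encoded as `k : Fin (m-1) → ℕ` via
`kᵢ = k (i-1) + 1`. -/
theorem ngon_volume_series (m : ℕ) (hm : 2 ≤ m) :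
    (∫ y in {y : Fin m → ℝ | ∀ i, y i ∈ Set.Ioo (0 : ℝ) 1},
        ∏ i ∈ Finset.range (m - 1), 1 / (1 - padR m y i * padR m y (i + 1)))
      = ∑' k : Fin (m - 1) → ℕ,
          1 / (((padN (m - 1) k 0 : ℝ) + 1) *
            (∏ i ∈ Finset.range (m - 2),
              ((padN (m - 1) k i : ℝ) + (padN (m - 1) k (i + 1) : ℝ) + 1)) *
            ((padN (m - 1) k (m - 2) : ℝ) + 1)) := by
  obtain ⟨p, rfl⟩ : ∃ p, m = p + 2 := ⟨m - 2, by omega⟩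
  have hm1 : p + 2 - 1 = p + 1 := rfl
  have hm2 : p + 2 - 2 = p := rfl
  rw [hm1, hm2]
  set S : Set (Fin (p+2) → ℝ) := {y | ∀ i, y i ∈ Set.Ioo (0 : ℝ) 1} with hSdef
  have hS : MeasurableSet S := by
    have : S = Set.pi Set.univ (fun _ : Fin (p+2) => Set.Ioo (0:ℝ) 1) := by
      ext y; simp [hSdef, Set.mem_pi]
    rw [this]
    exact MeasurableSet.univ_pi fun _ => measurableSet_Ioo
  set f : (Fin (p+2) → ℝ) → ℝ :=
    fun y => ∏ i ∈ Finset.range (p+1), 1 / (1 - padR (p+2) y i * padR (p+2) y (i+1)) with hfdef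
  -- basic facts about points of S
  have hY : ∀ y ∈ S, ∀ i : ℕ, i < p + 2 → 0 < padR (p+2) y i ∧ padR (p+2) y i < 1 := by
    intro y hy i hi
    have := hy ⟨i, hi⟩
    rw [padR, dif_pos hi]
    exact ⟨this.1, this.2⟩
  have hprod : ∀ y ∈ S, ∀ i ∈ Finset.range (p+1),
      0 ≤ padR (p+2) y i * padR (p+2) y (i+1) ∧ padR (p+2) y i * padR (p+2) y (i+1) < 1 := by
    intro y hy i hi
    rw [Finset.mem_range] at hi
    obtain ⟨h1, h2⟩ := hY y hy i (by omega)
    obtain ⟨h3, h4⟩ := hY y hy (i+1) (by omega)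
    constructor
    · positivity
    · nlinarith
  have hmeas_f : Measurable f := by
    refine Finset.measurable_prod _ fun i _ => ?_
    exact (measurable_const.div
      (measurable_const.sub ((measurable_padR _ _).mul (measurable_padR _ _))))
  have hnn : ∀ y ∈ S, 0 ≤ f y := by
    intro y hy
    refine Finset.prod_nonneg fun i hi => ?_
    obtain ⟨h1, h2⟩ := hprod y hy i hi
    have h3 : 0 < 1 - padR (p+2) y i * padR (p+2) y (i+1) := by linarith
    positivity
  rw [integral_eq_lintegral_of_nonneg_ae
      (ae_restrict_of_forall_mem hS hnn) hmeas_f.aestronglyMeasurable]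
  -- the monomial family
  set g : (Fin (p+1) → ℕ) → (Fin (p+2) → ℝ) → ℝ≥0∞ :=
    fun k y => ∏ j ∈ Finset.range (p+2),
      ENNReal.ofReal (padR (p+2) y j ^ expo (p+1) k j) with hgdef
  have hg_meas : ∀ k, Measurable (g k) := by
    intro k
    exact Finset.measurable_prod _ fun j _ =>
      ENNReal.measurable_ofReal.comp ((measurable_padR _ _).pow_const _)
  -- pointwise expansion on S
  have hexp : ∀ y ∈ S, ENNReal.ofReal (f y) = ∑' k : Fin (p+1) → ℕ, g k y := by
    intro y hy
    rw [hfdef]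
    rw [ENNReal.ofReal_prod_of_nonneg (fun i hi => by
      obtain ⟨h1, h2⟩ := hprod y hy i hi
      have h3 : 0 < 1 - padR (p+2) y i * padR (p+2) y (i+1) := by linarith
      positivity)]
    have hfac : ∀ i ∈ Finset.range (p+1),
        ENNReal.ofReal (1 / (1 - padR (p+2) y i * padR (p+2) y (i+1)))
          = ∑' c : ℕ, ENNReal.ofReal ((padR (p+2) y i * padR (p+2) y (i+1)) ^ c) := by
      intro i hi
      obtain ⟨h1, h2⟩ := hprod y hy i hi
      rw [one_div, ← tsum_geometric_of_lt_one h1 h2,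
        ENNReal.ofReal_tsum_of_nonneg (fun c => pow_nonneg h1 c)
          (summable_geometric_of_lt_one h1 h2)]
    rw [Finset.prod_congr rfl hfac]
    rw [Finset.prod_range fun i => ∑' c : ℕ,
      ENNReal.ofReal ((padR (p+2) y i * padR (p+2) y (i+1)) ^ c)]
    rw [tsum_prod_fin]
    refine tsum_congr fun k => ?_
    show _ = ∏ j ∈ Finset.range (p+2), ENNReal.ofReal (padR (p+2) y j ^ expo (p+1) k j)
    have hnn2 : ∀ j ∈ Finset.range (p+2), 0 ≤ padR (p+2) y j ^ expo (p+1) k j := by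
      intro j hj
      rw [Finset.mem_range] at hj
      exact pow_nonneg (hY y hy j hj).1.le _
    rw [← ENNReal.ofReal_prod_of_nonneg hnn2, ← monomial_eq]
    rw [ENNReal.ofReal_prod_of_nonneg (fun i hi => by
      obtain ⟨h1, _⟩ := hprod y hy i hi; positivity)]
    rw [Finset.prod_range fun i =>
      ENNReal.ofReal ((padR (p+2) y i * padR (p+2) y (i+1)) ^ padN (p+1) k i)]
    refine Finset.prod_congr rfl fun i _ => ?_
    have : padN (p+1) k ↑i = k i := by simp [padN, i.isLt]
    rw [this]
  -- interchange integral and sum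
  rw [setLIntegral_congr_fun hS hexp]
  rw [lintegral_tsum fun k => ((hg_meas k).aemeasurable.restrict)]
  -- compute each monomial integral
  have hmono : ∀ k : Fin (p+1) → ℕ,
      ∫⁻ y in S, g k y = ENNReal.ofReal (∏ j ∈ Finset.range (p+2),
        (1 / ((expo (p+1) k j : ℝ) + 1))) := by
    intro k
    rw [← lintegral_indicator hS]
    have hind : ∀ y : Fin (p+2) → ℝ, S.indicator (g k) y
        = ∏ j : Fin (p+2), (Set.Ioo (0:ℝ) 1).indicator
            (fun x => ENNReal.ofReal (x ^ expo (p+1) k (j : ℕ))) (y j) := by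
      intro y
      by_cases hy : y ∈ S
      · rw [Set.indicator_of_mem hy]
        show ∏ j ∈ Finset.range (p+2), ENNReal.ofReal (padR (p+2) y j ^ expo (p+1) k j) = _
        rw [Finset.prod_range fun j => ENNReal.ofReal (padR (p+2) y j ^ expo (p+1) k j)]
        refine Finset.prod_congr rfl fun j _ => ?_
        rw [Set.indicator_of_mem (hy j)]
        congr 2
        rw [padR, dif_pos j.isLt]
      · rw [Set.indicator_of_notMem hy]
        rw [hSdef, Set.mem_setOf_eq] at hy
        push_neg at hy
        obtain ⟨j, hj⟩ := hy
        refine (Finset.prod_eq_zero (Finset.mem_univ j) ?_).symm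
        rw [Set.indicator_of_notMem hj]
    calc ∫⁻ y, S.indicator (g k) y
        = ∫⁻ y : Fin (p+2) → ℝ, ∏ j : Fin (p+2), (Set.Ioo (0:ℝ) 1).indicator
            (fun x => ENNReal.ofReal (x ^ expo (p+1) k (j : ℕ))) (y j) :=
          lintegral_congr hind
      _ = ∏ j : Fin (p+2), ∫⁻ x : ℝ, (Set.Ioo (0:ℝ) 1).indicator
            (fun x => ENNReal.ofReal (x ^ expo (p+1) k (j : ℕ))) x :=
          lintegral_fin_pi_prod _ fun j =>
            (ENNReal.measurable_ofReal.comp (measurable_id.pow_const _)).indicator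
              measurableSet_Ioo
      _ = ∏ j : Fin (p+2), ENNReal.ofReal (1 / ((expo (p+1) k (j : ℕ) : ℝ) + 1)) := by
          refine Finset.prod_congr rfl fun j _ => ?_
          rw [lint_coord]
      _ = ENNReal.ofReal (∏ j ∈ Finset.range (p+2), (1 / ((expo (p+1) k j : ℝ) + 1))) := by
          rw [ENNReal.ofReal_prod_of_nonneg (fun j _ => by positivity),
            Finset.prod_range fun j => ENNReal.ofReal (1 / ((expo (p+1) k j : ℝ) + 1))]
  -- assemble
  rw [tsum_congr hmono]
  rw [ENNReal.tsum_toReal_eq fun k => ENNReal.ofReal_ne_top]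
  refine tsum_congr fun k => ?_
  rw [ENNReal.toReal_ofReal (Finset.prod_nonneg fun j _ => by positivity)]
  exact denom_eq p k
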